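/- arXiv:0705.0985 — 6 statements merged into one kernel-verified Lean document; each statement's English description precedes it below -/
import Mathlib

section
/- Let g be a finite-dimensional real Lie algebra with an ad-invariant inner product Q, h ⊆ g a Lie subalgebra, and m = h^⊥. Suppose there exists t > 1 such that K_t(x,y) ≥ 0 for all x, y ∈ g. Then for all x, y ∈ g with [x,y] = 0 one has [x_h, y_h] = 0, where x = x_h + x_m and y = y_h + y_m are the decompositions according to g = h ⊕ m. -/
/-!
Write `x = x_h + x_m`. For commuting `x, y` the invariance of `Q` gives
`[x_h, y_m]_h = [x_m, y_h]_h = 0` and hence `[x_m, y_m]_h = -[x_h, y_h]`. Rescaling the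
`m`-parts, `X = x_h + t x_m` and `Y = y_h + t y_m`, the vector inside the first term of
`K_t(X, Y)` becomes `t² [x, y] = 0`, and what is left is
`K_t(X, Y) = -(t/4) (t - 1)³ (3t + 1) ‖[x_h, y_h]‖²`, negative for `t > 1` unless `[x_h, y_h] = 0`.
-/

variable {g : Type*} [LieRing g] [LieAlgebra ℝ g] [FiniteDimensional ℝ g]

/-- The unnormalized sectional curvature expression `K_t(x,y)` of the left invariant metric
`Q_t = t Q|_h + Q|_m`, expressed via the inner product `Q` (as a bilinear form, so that
`‖z‖² = Q z z`) and the orthogonal projection `π` onto the subalgebra `h`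
(so `x_h = π x` and `x_m = x - π x`). -/
noncomputable def Kcurv (Q : LinearMap.BilinForm ℝ g) (π : g →ₗ[ℝ] g)
    (t : ℝ) (x y : g) : ℝ :=
  (1/4) * Q (⁅x - π x, y - π y⁆ - π ⁅x - π x, y - π y⁆
        + t • ⁅π x, y - π y⁆ + t • ⁅x - π x, π y⁆)
      (⁅x - π x, y - π y⁆ - π ⁅x - π x, y - π y⁆
        + t • ⁅π x, y - π y⁆ + t • ⁅x - π x, π y⁆)
    + (1/4) * t * Q ⁅π x, π y⁆ ⁅π x, π y⁆
    + (1/2) * t * (3 - 2*t) * Q ⁅π x, π y⁆ (π ⁅x - π x, y - π y⁆)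
    + (1 - (3/4)*t) * Q (π ⁅x - π x, y - π y⁆) (π ⁅x - π x, y - π y⁆)

section OrthogonalProjection

variable {V : Type*} [AddCommGroup V] [Module ℝ V]

structure IsOrthogonalProjection (Q : LinearMap.BilinForm ℝ V) (p : Submodule ℝ V)
    (π : V →ₗ[ℝ] V) : Prop where
  apply_mem : ∀ x, π x ∈ p
  sub_apply_orthogonal : ∀ x, ∀ w ∈ p, Q (x - π x) w = 0

namespace IsOrthogonalProjection

variable {Q : LinearMap.BilinForm ℝ V} {p : Submodule ℝ V} {π : V →ₗ[ℝ] V}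

theorem apply_of_mem (hπ : IsOrthogonalProjection Q p π) (hpos : ∀ x, x ≠ 0 → 0 < Q x x)
    {z : V} (hz : z ∈ p) : π z = z := by
  by_contra hne
  have hzero : Q (z - π z) (z - π z) = 0 :=
    hπ.sub_apply_orthogonal z _ (p.sub_mem hz (hπ.apply_mem z))
  exact (hpos _ (sub_ne_zero.mpr (Ne.symm hne))).ne' hzero

theorem apply_eq_zero_of_orthogonal (hπ : IsOrthogonalProjection Q p π)
    (hpos : ∀ x, x ≠ 0 → 0 < Q x x) {z : V} (hz : ∀ w ∈ p, Q z w = 0) : π z = 0 := by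
  by_contra hne
  have hzero : Q (π z) (π z) = 0 := by
    have h₁ := hπ.sub_apply_orthogonal z (π z) (hπ.apply_mem z)
    rw [LinearMap.map_sub₂, hz _ (hπ.apply_mem z)] at h₁
    linarith
  exact (hpos _ hne).ne' hzero

theorem apply_sub_apply (hπ : IsOrthogonalProjection Q p π) (hpos : ∀ x, x ≠ 0 → 0 < Q x x)
    (x : V) : π (x - π x) = 0 :=
  hπ.apply_eq_zero_of_orthogonal hpos (hπ.sub_apply_orthogonal x)

end IsOrthogonalProjection

end OrthogonalProjection

theorem lie_eq_sum_lie_components {L : Type*} [LieRing L] (π : L → L) (x y : L) :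
    ⁅x, y⁆ = ⁅π x, π y⁆ + ⁅π x, y - π y⁆ + ⁅x - π x, π y⁆ + ⁅x - π x, y - π y⁆ := by
  conv_lhs => rw [← add_sub_cancel (π x) x, ← add_sub_cancel (π y) y]
  rw [add_lie, lie_add, lie_add]
  abel

section LieAlgebra

variable {V : Type*} [LieRing V] [LieAlgebra ℝ V] {Q : LinearMap.BilinForm ℝ V}
  {h : LieSubalgebra ℝ V} {π : V →ₗ[ℝ] V}

theorem lie_orthogonal_of_mem_of_orthogonal (hinv : ∀ x y z : V, Q ⁅z, x⁆ y + Q x ⁅z, y⁆ = 0)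
    {a u : V} (ha : a ∈ h) (hu : ∀ w ∈ h, Q u w = 0) : ∀ w ∈ h, Q ⁅a, u⁆ w = 0 := by
  intro w hw
  have hskew := hinv u w a
  rw [hu _ (h.lie_mem ha hw)] at hskew
  linarith

theorem proj_lie_proj_sub (hπ : IsOrthogonalProjection Q h.toSubmodule π)
    (hpos : ∀ x, x ≠ 0 → 0 < Q x x) (hinv : ∀ x y z : V, Q ⁅z, x⁆ y + Q x ⁅z, y⁆ = 0)
    (x y : V) : π ⁅π x, y - π y⁆ = 0 :=
  hπ.apply_eq_zero_of_orthogonal hpos <|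
    lie_orthogonal_of_mem_of_orthogonal hinv (hπ.apply_mem x) (hπ.sub_apply_orthogonal y)

theorem proj_lie_sub_proj_sub_of_lie_eq_zero (hπ : IsOrthogonalProjection Q h.toSubmodule π)
    (hpos : ∀ x, x ≠ 0 → 0 < Q x x) (hinv : ∀ x y z : V, Q ⁅z, x⁆ y + Q x ⁅z, y⁆ = 0)
    {x y : V} (hxy : ⁅x, y⁆ = 0) : π ⁅x - π x, y - π y⁆ = -⁅π x, π y⁆ := by
  have hproj := congrArg π ((lie_eq_sum_lie_components π x y).symm.trans hxy)
  rw [map_add, map_add, map_add, proj_lie_proj_sub hπ hpos hinv, ← lie_skew (x - π x) (π y),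
    map_neg, proj_lie_proj_sub hπ hpos hinv,
    hπ.apply_of_mem hpos (h.lie_mem (hπ.apply_mem x) (hπ.apply_mem y)),
    neg_zero, add_zero, add_zero, map_zero] at hproj
  exact eq_neg_of_add_eq_zero_right hproj

theorem Kcurv_rescale_eq_of_lie_eq_zero (hπ : IsOrthogonalProjection Q h.toSubmodule π)
    (hpos : ∀ x, x ≠ 0 → 0 < Q x x) (hinv : ∀ x y z : V, Q ⁅z, x⁆ y + Q x ⁅z, y⁆ = 0)
    (t : ℝ) {x y : V} (hxy : ⁅x, y⁆ = 0) :
    Kcurv Q π t (π x + t • (x - π x)) (π y + t • (y - π y))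
      = -(t / 4 * ((t - 1) ^ 3 * (3 * t + 1))) * Q ⁅π x, π y⁆ ⁅π x, π y⁆ := by
  have hproj_rescale : ∀ z, π (π z + t • (z - π z)) = π z := fun z => by
    rw [map_add, map_smul, hπ.apply_sub_apply hpos, smul_zero, add_zero,
      hπ.apply_of_mem hpos (hπ.apply_mem z)]
  have hbracket_m := proj_lie_sub_proj_sub_of_lie_eq_zero hπ hpos hinv hxy
  have hfirst : ⁅t • (x - π x), t • (y - π y)⁆ - π ⁅t • (x - π x), t • (y - π y)⁆
      + t • ⁅π x, t • (y - π y)⁆ + t • ⁅t • (x - π x), π y⁆ = 0 := by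
    simp only [lie_smul, smul_lie, map_smul, smul_smul]
    rw [hbracket_m, ← smul_sub, ← smul_add, ← smul_add, ← smul_zero (t * t), ← hxy,
      lie_eq_sum_lie_components π x y]
    congr 1
    abel
  simp only [Kcurv, hproj_rescale, add_sub_cancel_left, hfirst]
  simp only [smul_lie, lie_smul, map_smul, hbracket_m, map_zero, LinearMap.smul_apply, map_neg,
    LinearMap.neg_apply, smul_eq_mul]
  ring

end LieAlgebra

theorem stmt_1_general
    (Q : LinearMap.BilinForm ℝ g)
    (hpos : ∀ x : g, x ≠ 0 → 0 < Q x x)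
    (hinv : ∀ x y z : g, Q ⁅z, x⁆ y + Q x ⁅z, y⁆ = 0)
    (h : LieSubalgebra ℝ g)
    (π : g →ₗ[ℝ] g)
    (hπh : ∀ x : g, π x ∈ h)
    (hπm : ∀ x : g, ∀ w ∈ h, Q (x - π x) w = 0)
    (hK : ∃ t : ℝ, 1 < t ∧ ∀ x y : g, 0 ≤ Kcurv Q π t x y) :
    ∀ x y : g, ⁅x, y⁆ = 0 → ⁅π x, π y⁆ = 0 := by
  intro x y hxy
  obtain ⟨t, ht, hKt⟩ := hK
  have hπ : IsOrthogonalProjection Q h.toSubmodule π := ⟨hπh, hπm⟩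
  have hK_rescaled := hKt (π x + t • (x - π x)) (π y + t • (y - π y))
  rw [Kcurv_rescale_eq_of_lie_eq_zero hπ hpos hinv t hxy] at hK_rescaled
  by_contra hne
  have hcoeff : 0 < t / 4 * ((t - 1) ^ 3 * (3 * t + 1)) := by
    have : 0 < t - 1 := sub_pos.mpr ht
    positivity
  linarith [mul_pos hcoeff (hpos _ hne)]

/-- If `K_t ≥ 0` for some `t > 1`, then any two commuting elements of `g` have commuting
`h`-components. -/
theorem stmt_1
    (Q : LinearMap.BilinForm ℝ g)
    (hsym : ∀ x y : g, Q x y = Q y x)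
    (hpos : ∀ x : g, x ≠ 0 → 0 < Q x x)
    (hinv : ∀ x y z : g, Q ⁅z, x⁆ y + Q x ⁅z, y⁆ = 0)
    (h : LieSubalgebra ℝ g)
    (π : g →ₗ[ℝ] g)
    (hπh : ∀ x : g, π x ∈ h)
    (hπm : ∀ x : g, ∀ w ∈ h, Q (x - π x) w = 0)
    (hK : ∃ t : ℝ, 1 < t ∧ ∀ x y : g, 0 ≤ Kcurv Q π t x y) :
    ∀ x y : g, ⁅x, y⁆ = 0 → ⁅π x, π y⁆ = 0 :=
  stmt_1_general Q hpos hinv h π hπh hπm hK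
end

section
/- Let g be a finite-dimensional real Lie algebra with an ad-invariant inner product Q, h ⊆ g a Lie subalgebra, and m = h^⊥. Then for every t with 0 < t ≤ 1 and all x, y ∈ g one has K_t(x,y) ≥ 0. -/
/-!
Completing the square, the terms of `K_t` built from `b = [x_h, y_h]` and `c = [x_m, y_m]_h`
equal `(t/4)‖b + (3 - 2t) c‖² + (1 - t)³ ‖c‖²`. For `0 < t ≤ 1` the curvature is therefore a
sum of non-negative multiples of squared norms.
-/

variable {g : Type*} [LieRing g] [LieAlgebra ℝ g] [FiniteDimensional ℝ g]

section SymmetricBilinForm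

variable {M : Type*} [AddCommGroup M] [Module ℝ M] (Q : LinearMap.BilinForm ℝ M)

lemma bilinForm_self_nonneg_of_pos (hpos : ∀ x : M, x ≠ 0 → 0 < Q x x) (z : M) :
    0 ≤ Q z z := by
  rcases eq_or_ne z 0 with rfl | hz
  · simp
  · exact (hpos z hz).le

lemma bilinForm_quadratic_complete_square (hsym : ∀ x y : M, Q x y = Q y x) (t : ℝ) (b c : M) :
    (1/4) * t * Q b b + (1/2) * t * (3 - 2*t) * Q b c + (1 - (3/4)*t) * Q c c
      = (t/4) * Q (b + (3 - 2*t) • c) (b + (3 - 2*t) • c) + (1 - t)^3 * Q c c := by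
  simp only [map_add, map_smul, LinearMap.add_apply, LinearMap.smul_apply, smul_eq_mul,
    hsym c b]
  ring

lemma bilinForm_quadratic_nonneg (hsym : ∀ x y : M, Q x y = Q y x) (hQ : ∀ z : M, 0 ≤ Q z z)
    {t : ℝ} (ht : 0 ≤ t) (ht1 : t ≤ 1) (b c : M) :
    0 ≤ (1/4) * t * Q b b + (1/2) * t * (3 - 2*t) * Q b c + (1 - (3/4)*t) * Q c c := by
  rw [bilinForm_quadratic_complete_square Q hsym]
  have h1t : 0 ≤ (1 - t)^3 := pow_nonneg (sub_nonneg.2 ht1) 3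
  exact add_nonneg (mul_nonneg (by linarith) (hQ _)) (mul_nonneg h1t (hQ _))

end SymmetricBilinForm

theorem stmt_4_general
    (Q : LinearMap.BilinForm ℝ g)
    (hsym : ∀ x y : g, Q x y = Q y x)
    (hpos : ∀ x : g, x ≠ 0 → 0 < Q x x)
    (π : g →ₗ[ℝ] g) :
    ∀ t : ℝ, 0 < t → t ≤ 1 → ∀ x y : g, 0 ≤ Kcurv Q π t x y := by
  intro t ht ht1 x y
  have hQ := bilinForm_self_nonneg_of_pos Q hpos
  have hquad := bilinForm_quadratic_nonneg Q hsym hQ ht.le ht1 ⁅π x, π y⁆ (π ⁅x - π x, y - π y⁆)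
  rw [Kcurv, add_assoc, add_assoc]
  rw [add_assoc] at hquad
  exact add_nonneg (mul_nonneg (by norm_num) (hQ _)) hquad

/-- For `0 < t ≤ 1` the metric `Q_t` has non-negative sectional curvature. -/
theorem stmt_4
    (Q : LinearMap.BilinForm ℝ g)
    (hsym : ∀ x y : g, Q x y = Q y x)
    (hpos : ∀ x : g, x ≠ 0 → 0 < Q x x)
    (hinv : ∀ x y z : g, Q ⁅z, x⁆ y + Q x ⁅z, y⁆ = 0)
    (h : LieSubalgebra ℝ g)
    (π : g →ₗ[ℝ] g)
    (hπh : ∀ x : g, π x ∈ h)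
    (hπm : ∀ x : g, ∀ w ∈ h, Q (x - π x) w = 0) :
    ∀ t : ℝ, 0 < t → t ≤ 1 → ∀ x y : g, 0 ≤ Kcurv Q π t x y :=
  stmt_4_general Q hsym hpos π
end

section
/- Let g be a finite-dimensional real Lie algebra with an ad-invariant inner product Q, h ⊆ g a simple Lie subalgebra, and m = h^⊥. Suppose that all x, y ∈ g with [x,y] = 0 satisfy [x_h, y_h] = 0. If y ∈ m is such that there exists a nonzero x ∈ h with [x, y] = 0, then [h', y] = 0 for all h' ∈ h. -/
variable {g : Type*} [LieRing g] [LieAlgebra ℝ g] [FiniteDimensional ℝ g]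

/-!
Commuting pairs are preserved by the automorphisms `exp (s • ad v)` of `g`, so the hypothesis on
commuting pairs can be differentiated at `s = 0`: if `w ∈ h` commutes with `y ∈ m` (so `π y = 0`
and `π w = w`), then `⁅w, π ⁅v, y⁆⁆ = 0` for every `v`. By ad-invariance of `Q` this makes
`π ⁅v, y⁆` orthogonal to `⁅h, w⁆`, and a second use of invariance shows that the centralizer of
`y` in `h` is an ideal of `h`. It contains `x ≠ 0`, so it is all of `h` by simplicity.
-/

open NormedSpace

section ExpOfDerivation

variable {E : Type*} [NormedAddCommGroup E] [NormedSpace ℝ E] [CompleteSpace E]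

theorem hasDerivAt_exp_smul_apply (A : E →L[ℝ] E) (a : E) (s : ℝ) :
    HasDerivAt (fun s : ℝ => exp (s • A) a) (A (exp (s • A) a)) s := by
  simpa using (hasDerivAt_exp_smul_const' A s).clm_apply (hasDerivAt_const s a)

theorem exp_smul_apply_bilin_of_derivation (B : E →L[ℝ] E →L[ℝ] E) (A : E →L[ℝ] E)
    (hA : ∀ a b, A (B a b) = B (A a) b + B a (A b)) (s : ℝ) (a b : E) :
    exp (s • A) (B a b) = B (exp (s • A) a) (exp (s • A) b) := by
  set X : ℝ → E := fun s => B (exp (s • A) a) (exp (s • A) b)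
  have hX : ∀ t, HasDerivAt X (A (X t)) t := fun t => by
    convert B.hasDerivAt_of_bilinear (fun _ => hasDerivAt_exp_smul_apply A a t)
      (fun _ => hasDerivAt_exp_smul_apply A b t) using 1
    rw [hA, add_comm]
  have hG : ∀ t, HasDerivAt (fun t => exp (t • -A) (X t)) 0 t := fun t => by
    convert (hasDerivAt_exp_smul_const (-A) t).clm_apply (hX t) using 1
    simp
  have hconst : exp (s • -A) (X s) = B a b := by
    simpa [X] using is_const_of_deriv_eq_zero (fun t => (hG t).differentiableAt)
      (fun t => (hG t).deriv) s 0
  have hinv : exp (s • A) * exp (s • -A) = 1 := by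
    have hball (C : E →L[ℝ] E) : C ∈ Metric.eball 0 (expSeries ℝ (E →L[ℝ] E)).radius :=
      (expSeries_radius_eq_top ℝ (E →L[ℝ] E)).symm ▸ edist_lt_top C 0
    rw [smul_neg, ← exp_add_of_commute_of_mem_ball (Commute.refl _).neg_right (hball _) (hball _),
      add_neg_cancel, exp_zero]
  rw [← hconst, ← mul_apply_eq_comp, hinv, one_apply_eq_self]

theorem bilin_apply_derivation_add_eq_zero_of_preserves_zero (B : E →L[ℝ] E →L[ℝ] E)
    (A P : E →L[ℝ] E) (hA : ∀ a b, A (B a b) = B (A a) b + B a (A b))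
    (hP : ∀ a b, B a b = 0 → B (P a) (P b) = 0) {a b : E} (hab : B a b = 0) :
    B (P (A a)) (P b) + B (P a) (P (A b)) = 0 := by
  have hderiv := B.hasDerivAt_of_bilinear
    (fun _ => P.hasFDerivAt.comp_hasDerivAt (0 : ℝ) (hasDerivAt_exp_smul_apply A a 0))
    (fun _ => P.hasFDerivAt.comp_hasDerivAt (0 : ℝ) (hasDerivAt_exp_smul_apply A b 0))
  have hzero : (fun s : ℝ => B (P (exp (s • A) a)) (P (exp (s • A) b))) = fun _ => 0 :=
    funext fun s => hP _ _ (by rw [← exp_smul_apply_bilin_of_derivation B A hA, hab, map_zero])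
  rw [Function.comp_def, Function.comp_def, hzero] at hderiv
  simpa [add_comm] using (hderiv.unique (hasDerivAt_const (0 : ℝ) (0 : E)))

end ExpOfDerivation

theorem lie_apply_ad_add_eq_zero_of_preserves_commuting (π : g →ₗ[ℝ] g)
    (hπ : ∀ x y : g, ⁅x, y⁆ = 0 → ⁅π x, π y⁆ = 0) {w y : g} (hwy : ⁅w, y⁆ = 0) (v : g) :
    ⁅π ⁅v, w⁆, π y⁆ + ⁅π w, π ⁅v, y⁆⁆ = 0 := by
  -- `g` carries no norm: work in coordinates, where `exp (s • ad v)` is available.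
  let e := (Module.finBasis ℝ g).equivFun
  let B := (LinearEquiv.conj e).toLinearMap ∘ₗ (LieAlgebra.ad ℝ g : g →ₗ[ℝ] Module.End ℝ g) ∘ₗ
    e.symm.toLinearMap |>.toContinuousBilinearMap
  have hB (a b) : B a b = e ⁅e.symm a, e.symm b⁆ := by simp [B, LinearEquiv.conj_apply]
  let A := LinearMap.toContinuousLinearMap (e.conj (LieAlgebra.ad ℝ g v))
  have hA (a) : A a = e ⁅v, e.symm a⁆ := by simp [A, LinearEquiv.conj_apply]
  let P := LinearMap.toContinuousLinearMap (e.conj π)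
  have hP (a) : P a = e (π (e.symm a)) := by simp [P, LinearEquiv.conj_apply]
  have key := bilin_apply_derivation_add_eq_zero_of_preserves_zero B A P (a := e w) (b := e y)
    (fun a b => by
      simp only [hA, hB, e.symm_apply_apply, ← map_add]
      exact congrArg e (leibniz_lie _ _ _))
    (fun a b hab => by simpa [hB, hP] using hπ _ _ (by simpa [hB] using hab))
    (by simp [hB, hwy])
  simp only [hA, hB, hP, e.symm_apply_apply, ← map_add] at key
  exact e.map_eq_zero_iff.mp key

section OrthogonalProjection

variable {V : Type*} [AddCommGroup V] [Module ℝ V] {Q : LinearMap.BilinForm ℝ V}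
  {S : Submodule ℝ V} {π : V →ₗ[ℝ] V}

theorem eq_zero_of_apply_self_eq_zero (hpos : ∀ x : V, x ≠ 0 → 0 < Q x x) {z : V}
    (hz : Q z z = 0) : z = 0 := by
  by_contra hz0
  exact (hpos z hz0).ne' hz

theorem proj_eq_self_of_mem (hpos : ∀ x : V, x ≠ 0 → 0 < Q x x) (hπS : ∀ x, π x ∈ S)
    (hπ : ∀ x, ∀ w ∈ S, Q (x - π x) w = 0) {w : V} (hw : w ∈ S) : π w = w :=
  (sub_eq_zero.mp (eq_zero_of_apply_self_eq_zero hpos (hπ w _ (S.sub_mem hw (hπS w))))).symm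

theorem proj_eq_zero_of_orthogonal (hpos : ∀ x : V, x ≠ 0 → 0 < Q x x) (hπS : ∀ x, π x ∈ S)
    (hπ : ∀ x, ∀ w ∈ S, Q (x - π x) w = 0) {y : V} (hy : ∀ w ∈ S, Q y w = 0) : π y = 0 := by
  apply eq_zero_of_apply_self_eq_zero hpos
  have h := hπ y (π y) (hπS y)
  rwa [map_sub, LinearMap.sub_apply, hy _ (hπS y), zero_sub, neg_eq_zero] at h

end OrthogonalProjection

theorem lie_eq_zero_of_proj_lie_orthogonal {L : Type*} [LieRing L] [LieAlgebra ℝ L]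
    {Q : LinearMap.BilinForm ℝ L} (hpos : ∀ x : L, x ≠ 0 → 0 < Q x x)
    (hinv : ∀ x y z : L, Q ⁅z, x⁆ y + Q x ⁅z, y⁆ = 0) {h : LieSubalgebra ℝ L} {π : L →ₗ[ℝ] L}
    (hπ : ∀ x : L, ∀ w ∈ h, Q (x - π x) w = 0) {u y : L} (hu : u ∈ h)
    (horth : ∀ v : L, Q (π ⁅v, y⁆) u = 0) : ⁅u, y⁆ = 0 := by
  apply eq_zero_of_apply_self_eq_zero hpos
  -- Q [u,y] [u,y] = Q y [[u,y],u] = -Q [[u,y],y] u = -Q (π [[u,y],y]) u = 0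
  have h₁ := hinv y ⁅u, y⁆ u
  have h₂ := hinv y u ⁅u, y⁆
  have h₃ := hπ ⁅⁅u, y⁆, y⁆ u hu
  rw [← lie_skew ⁅u, y⁆ u, map_neg] at h₂
  rw [map_sub, LinearMap.sub_apply, horth, sub_zero] at h₃
  linarith

theorem LieSubalgebra.lie_eq_zero_of_isSimple {R L : Type*} [CommRing R] [LieRing L]
    [LieAlgebra R L] (h : LieSubalgebra R L) (hsimple : LieAlgebra.IsSimple R h) {x y : L}
    (hxh : x ∈ h) (hx0 : x ≠ 0) (hxy : ⁅x, y⁆ = 0)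
    (hclosed : ∀ u ∈ h, ∀ w ∈ h, ⁅w, y⁆ = 0 → ⁅⁅u, w⁆, y⁆ = 0) :
    ∀ u ∈ h, ⁅u, y⁆ = 0 := by
  let K : LieIdeal R h :=
    { carrier := {w : h | ⁅(w : L), y⁆ = 0}
      add_mem' := fun ha hb => by simp_all [add_lie]
      zero_mem' := by simp
      smul_mem' := fun c a ha => by simp_all [smul_lie]
      lie_mem := fun {u w} hw => hclosed u u.2 w w.2 hw }
  have hK : K = ⊤ := (hsimple.eq_bot_or_eq_top K).resolve_left fun hbot => by
    have hx : (⟨x, hxh⟩ : h) ∈ K := hxy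
    rw [hbot, LieSubmodule.mem_bot] at hx
    exact hx0 (congrArg Subtype.val hx)
  intro u hu
  exact show (⟨u, hu⟩ : h) ∈ K from hK ▸ LieSubmodule.mem_top _

theorem stmt_6_general
    (Q : LinearMap.BilinForm ℝ g)
    (hpos : ∀ x : g, x ≠ 0 → 0 < Q x x)
    (hinv : ∀ x y z : g, Q ⁅z, x⁆ y + Q x ⁅z, y⁆ = 0)
    (h : LieSubalgebra ℝ g)
    (π : g →ₗ[ℝ] g)
    (hπh : ∀ x : g, π x ∈ h)
    (hπm : ∀ x : g, ∀ w ∈ h, Q (x - π x) w = 0)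
    (hsimple : LieAlgebra.IsSimple ℝ h)
    (hcomm : ∀ x y : g, ⁅x, y⁆ = 0 → ⁅π x, π y⁆ = 0)
    (y : g) (hym : ∀ w ∈ h, Q y w = 0)
    (x : g) (hxh : x ∈ h) (hx0 : x ≠ 0) (hxy : ⁅x, y⁆ = 0) :
    ∀ h' ∈ h, ⁅h', y⁆ = 0 := by
  have hπy : π y = 0 := proj_eq_zero_of_orthogonal (S := h.toSubmodule) hpos hπh hπm hym
  refine h.lie_eq_zero_of_isSimple hsimple hxh hx0 hxy fun u hu w hw hwy => ?_
  refine lie_eq_zero_of_proj_lie_orthogonal hpos hinv hπm (h.lie_mem hu hw) fun v => ?_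
  have hwπ : ⁅w, π ⁅v, y⁆⁆ = 0 := by
    simpa [hπy, proj_eq_self_of_mem (S := h.toSubmodule) hpos hπh hπm hw] using
      lie_apply_ad_add_eq_zero_of_preserves_commuting π hcomm hwy v
  have h₁ := hinv (π ⁅v, y⁆) u w
  rw [hwπ, map_zero, LinearMap.zero_apply, zero_add, ← lie_skew w u, map_neg, neg_eq_zero] at h₁
  exact h₁

/-- Step 1: if `h` is simple and `y ∈ m` commutes with some nonzero `x ∈ h`, then `y`
commutes with all of `h`. -/
theorem stmt_6
    (Q : LinearMap.BilinForm ℝ g)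
    (hsym : ∀ x y : g, Q x y = Q y x)
    (hpos : ∀ x : g, x ≠ 0 → 0 < Q x x)
    (hinv : ∀ x y z : g, Q ⁅z, x⁆ y + Q x ⁅z, y⁆ = 0)
    (h : LieSubalgebra ℝ g)
    (π : g →ₗ[ℝ] g)
    (hπh : ∀ x : g, π x ∈ h)
    (hπm : ∀ x : g, ∀ w ∈ h, Q (x - π x) w = 0)
    (hsimple : LieAlgebra.IsSimple ℝ h)
    (hcomm : ∀ x y : g, ⁅x, y⁆ = 0 → ⁅π x, π y⁆ = 0)
    (y : g) (hym : ∀ w ∈ h, Q y w = 0)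
    (x : g) (hxh : x ∈ h) (hx0 : x ≠ 0) (hxy : ⁅x, y⁆ = 0) :
    ∀ h' ∈ h, ⁅h', y⁆ = 0 :=
  stmt_6_general Q hpos hinv h π hπh hπm hsimple hcomm y hym x hxh hx0 hxy
end

section
/- Let g be a finite-dimensional real Lie algebra with an ad-invariant inner product Q, h ⊆ g a Lie subalgebra, and m = h^⊥. Suppose that all u, v ∈ g with [u,v] = 0 satisfy [u_h, v_h] = 0. If x ∈ h and y ∈ m satisfy [x,y] = 0, then [[x, h'], y] = 0 for all h' ∈ h. -/
variable {g : Type*} [LieRing g] [LieAlgebra ℝ g] [FiniteDimensional ℝ g]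

/-!
Conjugating a commuting pair `(u, v)` by the automorphisms `exp (t • ad μ)` keeps it commuting,
so `⁅π (exp (t • ad μ) u), π (exp (t • ad μ) v)⁆ = 0` for all `t`; differentiating at `t = 0`
gives `⁅π ⁅μ, u⁆, π v⁆ + ⁅π u, π ⁅μ, v⁆⁆ = 0`. For `u = x ∈ h` and `v = y ∈ m` this says that
`x` commutes with `π ⁅μ, y⁆` for every `μ`.

With `T = ⁅⁅x, h'⁆, y⁆` and `s = ⁅⁅y, h'⁆, y⁆`, the Jacobi identity gives `⁅y, T⁆ = ⁅x, s⁆`, so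
invariance of `Q` yields `Q T T = -Q s ⁅x, ⁅x, h'⁆⁆`. Since `⁅x, ⁅x, h'⁆⁆ ∈ h`, only `π s`
contributes, and `Q (π s) ⁅x, ⁅x, h'⁆⁆ = -Q ⁅x, π s⁆ ⁅x, h'⁆ = 0`.
-/

namespace ContinuousLinearMap

open NormedSpace

variable {E : Type*} [NormedAddCommGroup E] [NormedSpace ℝ E] [CompleteSpace E]

theorem hasDerivAt_exp_smul_apply (D : E →L[ℝ] E) (a : E) (t : ℝ) :
    HasDerivAt (fun s : ℝ => exp (s • D) a) (D (exp (t • D) a)) t := by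
  simpa using (hasDerivAt_exp_smul_const' D t).clm_apply (hasDerivAt_const t a)

theorem eq_exp_smul_apply_of_hasDerivAt {D : E →L[ℝ] E} {w : ℝ → E}
    (hw : ∀ s, HasDerivAt w (D (w s)) s) (t : ℝ) : w t = exp (t • D) (w 0) := by
  have hconst : ∀ s, HasDerivAt (fun r => exp ((t - r) • D) (w r)) 0 s := fun s => by
    simpa using ((hasDerivAt_exp_smul_const D (t - s)).scomp s
      ((hasDerivAt_id s).const_sub t)).clm_apply (hw s)
  simpa using is_const_of_deriv_eq_zero (fun s => (hconst s).differentiableAt)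
    (fun s => (hconst s).deriv) t 0

theorem exp_smul_apply_apply_of_derivation (β : E →L[ℝ] E →L[ℝ] E) {D : E →L[ℝ] E}
    (hD : ∀ a b, D (β a b) = β (D a) b + β a (D b)) (t : ℝ) (a b : E) :
    β (exp (t • D) a) (exp (t • D) b) = exp (t • D) (β a b) := by
  have hw : ∀ s, HasDerivAt (fun s : ℝ => β (exp (s • D) a) (exp (s • D) b))
      (D (β (exp (s • D) a) (exp (s • D) b))) s := by
    intro s
    convert β.hasDerivAt_of_bilinear (fun _ => hasDerivAt_exp_smul_apply D a s)
      (fun _ => hasDerivAt_exp_smul_apply D b s) using 1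
    rw [hD, add_comm]
  simpa using eq_exp_smul_apply_of_hasDerivAt hw t

theorem apply_apply_add_apply_apply_eq_zero (β : E →L[ℝ] E →L[ℝ] E) {D : E →L[ℝ] E}
    (hD : ∀ a b, D (β a b) = β (D a) b + β a (D b)) (P : E →L[ℝ] E)
    (hP : ∀ a b, β a b = 0 → β (P a) (P b) = 0) {a b : E} (hab : β a b = 0) :
    β (P (D a)) (P b) + β (P a) (P (D b)) = 0 := by
  have hG : HasDerivAt (fun t : ℝ => β (P (exp (t • D) a)) (P (exp (t • D) b)))
      (β (P a) (P (D b)) + β (P (D a)) (P b)) 0 := by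
    simpa using β.hasDerivAt_of_bilinear
      (fun _ => P.hasFDerivAt.comp_hasDerivAt 0 (hasDerivAt_exp_smul_apply D a 0))
      (fun _ => P.hasFDerivAt.comp_hasDerivAt 0 (hasDerivAt_exp_smul_apply D b 0))
  have hG0 : (fun t : ℝ => β (P (exp (t • D) a)) (P (exp (t • D) b))) = fun _ => 0 :=
    funext fun t => hP _ _ <| by rw [exp_smul_apply_apply_of_derivation β hD, hab, map_zero]
  rw [hG0, add_comm] at hG
  exact hG.unique (hasDerivAt_const 0 0)

end ContinuousLinearMap

theorem lie_map_lie_add_lie_map_lie_eq_zero {L : Type*} [LieRing L] [LieAlgebra ℝ L]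
    [FiniteDimensional ℝ L] (π : L →ₗ[ℝ] L) (hπ : ∀ u v : L, ⁅u, v⁆ = 0 → ⁅π u, π v⁆ = 0)
    {u v : L} (huv : ⁅u, v⁆ = 0) (μ : L) :
    ⁅π ⁅μ, u⁆, π v⁆ + ⁅π u, π ⁅μ, v⁆⁆ = 0 := by
  -- `L` carries no norm, so the bracket, `ad μ` and `π` are transported to coordinates.
  let V := Fin (Module.finrank ℝ L) → ℝ
  let e : L ≃ₗ[ℝ] V := (Module.finBasis ℝ L).equivFun
  let ad : L →ₗ[ℝ] L →ₗ[ℝ] L := LinearMap.mk₂ ℝ (⁅·, ·⁆) add_lie smul_lie lie_add lie_smul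
  let β : V →L[ℝ] V →L[ℝ] V := (e.arrowCongr e.conj ad).toContinuousBilinearMap
  have hβ : ∀ a b, β a b = e ⁅e.symm a, e.symm b⁆ := fun a b => by
    simp [β, ad, LinearMap.toContinuousBilinearMap_apply, LinearEquiv.conj_apply]
  have key := ContinuousLinearMap.apply_apply_add_apply_apply_eq_zero β
    (D := LinearMap.toContinuousLinearMap (e.conj (ad μ)))
    (fun a b => by simp [hβ, ad, LinearEquiv.conj_apply])
    (LinearMap.toContinuousLinearMap (e.conj π))
    (fun a b hab => by simp_all [LinearEquiv.conj_apply])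
    (a := e u) (b := e v) (by simp [hβ, huv])
  simpa [hβ, ad, LinearEquiv.conj_apply, ← map_add] using key

section InvariantForm

variable {M : Type*} [AddCommGroup M] [Module ℝ M] {Q : LinearMap.BilinForm ℝ M}

theorem LinearMap.BilinForm.eq_zero_of_apply_self_eq_zero (hpos : ∀ x, x ≠ 0 → 0 < Q x x)
    {c : M} (hc : Q c c = 0) : c = 0 := by
  by_contra hne
  exact (hpos c hne).ne' hc

structure IsOrthogonalProjection_s7 (Q : LinearMap.BilinForm ℝ M) (K : Submodule ℝ M)
    (π : M →ₗ[ℝ] M) : Prop where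
  mem : ∀ x, π x ∈ K
  orthogonal : ∀ x, ∀ w ∈ K, Q (x - π x) w = 0

namespace IsOrthogonalProjection_s7

variable {K : Submodule ℝ M} {π : M →ₗ[ℝ] M}

theorem apply_eq_self (hπ : IsOrthogonalProjection_s7 Q K π) (hpos : ∀ x, x ≠ 0 → 0 < Q x x)
    {x : M} (hx : x ∈ K) : π x = x := by
  have hxK : x - π x ∈ K := K.sub_mem hx (hπ.mem x)
  exact (sub_eq_zero.mp (Q.eq_zero_of_apply_self_eq_zero hpos (hπ.orthogonal x _ hxK))).symm

theorem apply_eq_zero (hπ : IsOrthogonalProjection_s7 Q K π) (hpos : ∀ x, x ≠ 0 → 0 < Q x x)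
    {y : M} (hy : ∀ w ∈ K, Q y w = 0) : π y = 0 := by
  refine Q.eq_zero_of_apply_self_eq_zero hpos ?_
  have h := hπ.orthogonal y (π y) (hπ.mem y)
  rw [map_sub, LinearMap.sub_apply, hy _ (hπ.mem y), zero_sub, neg_eq_zero] at h
  exact h

end IsOrthogonalProjection_s7

end InvariantForm

theorem lie_lie_lie_comm_of_lie_eq_zero {L : Type*} [LieRing L] {x y : L} (hxy : ⁅x, y⁆ = 0)
    (z : L) : ⁅y, ⁅⁅x, z⁆, y⁆⁆ = ⁅x, ⁅⁅y, z⁆, y⁆⁆ := by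
  have hyx : ⁅y, x⁆ = 0 := by rw [← lie_skew, hxy, neg_zero]
  rw [leibniz_lie y, leibniz_lie x, leibniz_lie y x z, leibniz_lie x y z, hxy, hyx]
  simp

theorem stmt_7_general
    (Q : LinearMap.BilinForm ℝ g)
    (hpos : ∀ x : g, x ≠ 0 → 0 < Q x x)
    (hinv : ∀ x y z : g, Q ⁅z, x⁆ y + Q x ⁅z, y⁆ = 0)
    (h : LieSubalgebra ℝ g)
    (π : g →ₗ[ℝ] g)
    (hπh : ∀ x : g, π x ∈ h)
    (hπm : ∀ x : g, ∀ w ∈ h, Q (x - π x) w = 0)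
    (hcomm : ∀ u v : g, ⁅u, v⁆ = 0 → ⁅π u, π v⁆ = 0)
    (x y : g) (hxh : x ∈ h) (hym : ∀ w ∈ h, Q y w = 0) (hxy : ⁅x, y⁆ = 0) :
    ∀ h' ∈ h, ⁅⁅x, h'⁆, y⁆ = 0 := by
  intro h' hh'
  have hπ : IsOrthogonalProjection_s7 Q h.toSubmodule π := ⟨hπh, hπm⟩
  have hπx : π x = x := hπ.apply_eq_self hpos hxh
  have hπy : π y = 0 := hπ.apply_eq_zero hpos hym
  have hkey : ∀ μ, ⁅x, π ⁅μ, y⁆⁆ = 0 := fun μ => by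
    simpa [hπx, hπy] using lie_map_lie_add_lie_map_lie_eq_zero π hcomm hxy μ
  have hQ : ∀ a b z : g, Q ⁅z, a⁆ b = -Q a ⁅z, b⁆ := fun a b z =>
    eq_neg_of_add_eq_zero_left (hinv a b z)
  set b := ⁅x, h'⁆
  set s := ⁅⁅y, h'⁆, y⁆
  have hxb : ⁅x, b⁆ ∈ h := h.lie_mem hxh (h.lie_mem hxh hh')
  refine Q.eq_zero_of_apply_self_eq_zero hpos ?_
  calc Q ⁅b, y⁆ ⁅b, y⁆ = Q ⁅y, ⁅b, y⁆⁆ b := by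
        rw [hQ ⁅b, y⁆ b y, ← lie_skew y b, map_neg, neg_neg]
    _ = -Q s ⁅x, b⁆ := by rw [lie_lie_lie_comm_of_lie_eq_zero hxy, hQ s b x]
    _ = -Q (π s) ⁅x, b⁆ := by
      rw [neg_inj, ← sub_eq_zero, ← LinearMap.sub_apply, ← map_sub]
      exact hπm s _ hxb
    _ = 0 := by rw [← hQ (π s) b x, hkey, map_zero, LinearMap.zero_apply]

/-- If `x ∈ h` and `y ∈ m` commute, then `[[x, h], y] = 0`. -/
theorem stmt_7
    (Q : LinearMap.BilinForm ℝ g)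
    (hsym : ∀ x y : g, Q x y = Q y x)
    (hpos : ∀ x : g, x ≠ 0 → 0 < Q x x)
    (hinv : ∀ x y z : g, Q ⁅z, x⁆ y + Q x ⁅z, y⁆ = 0)
    (h : LieSubalgebra ℝ g)
    (π : g →ₗ[ℝ] g)
    (hπh : ∀ x : g, π x ∈ h)
    (hπm : ∀ x : g, ∀ w ∈ h, Q (x - π x) w = 0)
    (hcomm : ∀ u v : g, ⁅u, v⁆ = 0 → ⁅π u, π v⁆ = 0)
    (x y : g) (hxh : x ∈ h) (hym : ∀ w ∈ h, Q y w = 0) (hxy : ⁅x, y⁆ = 0) :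
    ∀ h' ∈ h, ⁅⁅x, h'⁆, y⁆ = 0 :=
  stmt_7_general Q hpos hinv h π hπh hπm hcomm x y hxh hym hxy
end

section
/- Let g be a finite-dimensional real Lie algebra with an ad-invariant inner product Q, h ⊆ g a simple Lie subalgebra, and m = h^⊥. Suppose that all u, v ∈ g with [u,v] = 0 satisfy [u_h, v_h] = 0. Let y ∈ m satisfy [h', y] = 0 for all h' ∈ h. Then Q([a, [b, y]], h') = 0 for all a, b ∈ g and all h' ∈ h; in particular Q([a, [a, y]], h') = 0 for all a ∈ m and h' ∈ h. -/
/-!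
For `x ∈ g` the flow `exp (s • ad x)` consists of Lie algebra automorphisms, so for `t ∈ h` the
elements `exp (s • ad x) y` and `exp (s • ad x) t` commute for every `s`, and hence so do their
projections to `h`. Differentiating this twice at `s = 0`, and using `π y = 0` and `π ⁅x, y⁆ = 0`
(the latter by ad-invariance of `Q`), gives `⁅π ⁅x, ⁅x, y⁆⁆, t⁆ = 0`. Thus `π ⁅x, ⁅x, y⁆⁆` is central
in the simple algebra `h`, hence zero, and polarizing in `x` yields `π ⁅a, ⁅b, y⁆⁆ = 0`.
-/

variable {g : Type*} [LieRing g] [LieAlgebra ℝ g] [FiniteDimensional ℝ g]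

open NormedSpace

section ExpOfDerivation

variable {V W : Type*} [NormedAddCommGroup V] [NormedSpace ℝ V] [CompleteSpace V]
  [NormedAddCommGroup W] [NormedSpace ℝ W]

theorem hasDerivAt_exp_smul_apply_s13 (D : V →L[ℝ] V) (u : V) (s : ℝ) :
    HasDerivAt (fun t : ℝ => exp (t • D) u) (D (exp (s • D) u)) s := by
  simpa using (hasDerivAt_exp_smul_const' D s).clm_apply (hasDerivAt_const s u)

theorem hasDerivAt_bilin_exp_smul_apply (C : V →L[ℝ] V →L[ℝ] W) (D : V →L[ℝ] V) (u v : V)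
    (s : ℝ) :
    HasDerivAt (fun t : ℝ => C (exp (t • D) u) (exp (t • D) v))
      (C (D (exp (s • D) u)) (exp (s • D) v) + C (exp (s • D) u) (D (exp (s • D) v))) s :=
  (C.hasFDerivAt.comp_hasDerivAt s (hasDerivAt_exp_smul_apply_s13 D u s)).clm_apply
    (hasDerivAt_exp_smul_apply_s13 D v s)

theorem exp_smul_mul_exp_smul_neg (D : V →L[ℝ] V) (s : ℝ) :
    exp (s • D) * exp (s • -D) = 1 := by
  have hball : ∀ E : V →L[ℝ] V, E ∈ Metric.eball 0 (expSeries ℝ (V →L[ℝ] V)).radius := by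
    simp [expSeries_radius_eq_top]
  rw [smul_neg, ← exp_add_of_commute_of_mem_ball (Commute.refl (s • D)).neg_right (hball _)
    (hball _), add_neg_cancel, exp_zero]

theorem bilin_exp_smul_apply_of_derivation (B : V →L[ℝ] V →L[ℝ] V) (D : V →L[ℝ] V)
    (hD : ∀ u v, D (B u v) = B (D u) v + B u (D v)) (u v : V) (s : ℝ) :
    B (exp (s • D) u) (exp (s • D) v) = exp (s • D) (B u v) := by
  set F : ℝ → V := fun t => B (exp (t • D) u) (exp (t • D) v)
  have hF : ∀ t, HasDerivAt F (D (F t)) t := fun t => by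
    simpa only [F, hD] using hasDerivAt_bilin_exp_smul_apply B D u v t
  -- `F` solves `F' = D F`, so `exp (t • -D) (F t)` is constant.
  have hΦ : ∀ t, HasDerivAt (fun t => exp (t • -D) (F t)) 0 t := fun t => by
    simpa using (hasDerivAt_exp_smul_const (-D) t).clm_apply (hF t)
  have hconst : exp (s • -D) (F s) = B u v := by
    simpa [F] using is_const_of_deriv_eq_zero (fun t => (hΦ t).differentiableAt)
      (fun t => (hΦ t).deriv) s 0
  calc F s = (exp (s • D) * exp (s • -D)) (F s) := by rw [exp_smul_mul_exp_smul_neg]; rfl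
    _ = exp (s • D) (B u v) := by rw [mul_apply_eq_comp, hconst]

theorem bilin_exp_smul_apply_derivative_eq_zero (C : V →L[ℝ] V →L[ℝ] W) (D : V →L[ℝ] V)
    (u v : V) (h : ∀ s : ℝ, C (exp (s • D) u) (exp (s • D) v) = 0) (s : ℝ) :
    C (D (exp (s • D) u)) (exp (s • D) v) + C (exp (s • D) u) (D (exp (s • D) v)) = 0 :=
  (hasDerivAt_bilin_exp_smul_apply C D u v s).unique <| by
    rw [show (fun t : ℝ => C (exp (t • D) u) (exp (t • D) v)) = fun _ => 0 from funext h]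
    exact hasDerivAt_const s 0

theorem bilin_second_variation_eq_zero (C : V →L[ℝ] V →L[ℝ] W) (D : V →L[ℝ] V)
    (u v : V) (h : ∀ s : ℝ, C (exp (s • D) u) (exp (s • D) v) = 0) :
    C (D (D u)) v + (2 : ℝ) • C (D u) (D v) + C u (D (D v)) = 0 := by
  let C' := C.bilinearComp D (.id ℝ V) + C.bilinearComp (.id ℝ V) D
  have h' := bilin_exp_smul_apply_derivative_eq_zero C' D u v
    (bilin_exp_smul_apply_derivative_eq_zero C D u v h) 0
  simp only [C', zero_smul, exp_zero, add_apply,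
    ContinuousLinearMap.bilinearComp_apply, ContinuousLinearMap.id_apply, one_apply_eq_self] at h'
  rw [← h', two_smul]
  abel

end ExpOfDerivation

theorem LieSubalgebra.eq_zero_of_forall_lie_eq_zero {R L : Type*} [CommRing R] [LieRing L]
    [LieAlgebra R L] {H : LieSubalgebra R L} [LieAlgebra.IsSimple R H] {z : L} (hz : z ∈ H)
    (hzH : ∀ w ∈ H, ⁅w, z⁆ = 0) : z = 0 := by
  have hcenter : (⟨z, hz⟩ : H) ∈ LieAlgebra.center R H := by
    rw [LieAlgebra.center, LieModule.mem_maxTrivSubmodule]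
    exact fun w => Subtype.ext (hzH w w.2)
  rw [LieAlgebra.center_eq_bot R H, LieSubmodule.mem_bot] at hcenter
  exact congrArg Subtype.val hcenter

theorem proj_lie_lie_eq_zero_of_forall {L M : Type*} [LieRing L] [LieAlgebra ℝ L]
    [AddCommGroup M] [Module ℝ M] (π : L →ₗ[ℝ] M) {y : L} (hy : ∀ c : L, π ⁅c, y⁆ = 0)
    (hy₂ : ∀ x : L, π ⁅x, ⁅x, y⁆⁆ = 0) (a b : L) : π ⁅a, ⁅b, y⁆⁆ = 0 := by
  have hsum : π ⁅a, ⁅b, y⁆⁆ + π ⁅b, ⁅a, y⁆⁆ = 0 := by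
    have := hy₂ (a + b)
    simp only [add_lie, lie_add, map_add, hy₂, zero_add, add_zero] at this
    rwa [add_comm] at this
  have hswap : π ⁅a, ⁅b, y⁆⁆ = π ⁅b, ⁅a, y⁆⁆ := by
    rw [leibniz_lie a b y, map_add, hy, zero_add]
  rw [← hswap, ← two_smul ℝ] at hsum
  exact (smul_eq_zero.mp hsum).resolve_left two_ne_zero

theorem lie_proj_second_variation_eq_zero {L : Type*} [LieRing L] [LieAlgebra ℝ L]
    [FiniteDimensional ℝ L] (π : L →ₗ[ℝ] L) (hcomm : ∀ u v : L, ⁅u, v⁆ = 0 → ⁅π u, π v⁆ = 0)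
    {u v : L} (huv : ⁅u, v⁆ = 0) (x : L) :
    ⁅π ⁅x, ⁅x, u⁆⁆, π v⁆ + (2 : ℝ) • ⁅π ⁅x, u⁆, π ⁅x, v⁆⁆ + ⁅π u, π ⁅x, ⁅x, v⁆⁆⁆ = 0 := by
  let ad : L →ₗ[ℝ] L →ₗ[ℝ] L := LinearMap.mk₂ ℝ (⁅·, ·⁆) add_lie smul_lie lie_add lie_smul
  -- any norm will do: it only serves to make sense of `exp` and of derivatives
  let e := Module.finBasis ℝ L
  let _ : NormedAddCommGroup L :=
    NormedAddCommGroup.induced L (Fin (Module.finrank ℝ L) → ℝ) e.equivFun e.equivFun.injective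
  let _ : NormedSpace ℝ L := NormedSpace.induced ℝ L (Fin (Module.finrank ℝ L) → ℝ) e.equivFun
  have : CompleteSpace L := FiniteDimensional.complete ℝ L
  let bracket : L →L[ℝ] L →L[ℝ] L :=
    LinearMap.toContinuousLinearMap (LinearMap.toContinuousLinearMap.toLinearMap ∘ₗ ad)
  let D : L →L[ℝ] L := LinearMap.toContinuousLinearMap (ad x)
  let P : L →L[ℝ] L := LinearMap.toContinuousLinearMap π
  have hD : ∀ a b, D (bracket a b) = bracket (D a) b + bracket a (D b) :=
    fun a b => leibniz_lie x a b
  refine bilin_second_variation_eq_zero (bracket.bilinearComp P P) D u v fun s => ?_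
  have h := bilin_exp_smul_apply_of_derivation bracket D hD u v s
  exact hcomm _ _ (h.trans (by simp [bracket, ad, huv]))

section OrthogonalProjection

variable {L : Type*} [LieRing L] [LieAlgebra ℝ L] {Q : LinearMap.BilinForm ℝ L}
  {H : LieSubalgebra ℝ L} {π : L →ₗ[ℝ] L}

theorem proj_eq_zero_of_forall_orthogonal (hpos : ∀ x : L, x ≠ 0 → 0 < Q x x)
    (hπH : ∀ x, π x ∈ H) (hπQ : ∀ x, ∀ w ∈ H, Q (x - π x) w = 0) {x : L}
    (hx : ∀ w ∈ H, Q x w = 0) : π x = 0 := by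
  by_contra hne
  have hπx : Q (π x) (π x) = 0 := by
    simpa [hx _ (hπH x)] using hπQ x (π x) (hπH x)
  exact (hpos _ hne).ne' hπx

theorem proj_eq_self_of_mem_s13 (hpos : ∀ x : L, x ≠ 0 → 0 < Q x x) (hπH : ∀ x, π x ∈ H)
    (hπQ : ∀ x, ∀ w ∈ H, Q (x - π x) w = 0) {w : L} (hw : w ∈ H) : π w = w := by
  by_contra hne
  exact (hpos _ (sub_ne_zero.mpr (Ne.symm hne))).ne' (hπQ w _ (H.sub_mem hw (hπH w)))

theorem lie_orthogonal_of_forall_lie_eq_zero (hinv : ∀ x y z : L, Q ⁅z, x⁆ y + Q x ⁅z, y⁆ = 0)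
    {y : L} (hy : ∀ w ∈ H, ⁅w, y⁆ = 0) (c : L) : ∀ w ∈ H, Q ⁅c, y⁆ w = 0 := by
  intro w hw
  have := hinv c w y
  rw [← lie_skew y w, hy w hw, neg_zero, map_zero, add_zero] at this
  rw [← lie_skew, map_neg, LinearMap.neg_apply, this, neg_zero]

end OrthogonalProjection

theorem stmt_13_general
    (Q : LinearMap.BilinForm ℝ g)
    (hpos : ∀ x : g, x ≠ 0 → 0 < Q x x)
    (hinv : ∀ x y z : g, Q ⁅z, x⁆ y + Q x ⁅z, y⁆ = 0)
    (h : LieSubalgebra ℝ g)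
    (π : g →ₗ[ℝ] g)
    (hπh : ∀ x : g, π x ∈ h)
    (hπm : ∀ x : g, ∀ w ∈ h, Q (x - π x) w = 0)
    (hsimple : LieAlgebra.IsSimple ℝ h)
    (hcomm : ∀ u v : g, ⁅u, v⁆ = 0 → ⁅π u, π v⁆ = 0)
    (y : g) (hym : ∀ w ∈ h, Q y w = 0) (hy : ∀ h' ∈ h, ⁅h', y⁆ = 0) :
    (∀ a b : g, ∀ h' ∈ h, Q ⁅a, ⁅b, y⁆⁆ h' = 0)
    ∧ ∀ a : g, (∀ w ∈ h, Q a w = 0) → ∀ h' ∈ h, Q ⁅a, ⁅a, y⁆⁆ h' = 0 := by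
  have hπy : π y = 0 := proj_eq_zero_of_forall_orthogonal hpos hπh hπm hym
  have hπlie (c : g) : π ⁅c, y⁆ = 0 :=
    proj_eq_zero_of_forall_orthogonal hpos hπh hπm (lie_orthogonal_of_forall_lie_eq_zero hinv hy c)
  have hπlie_lie (x : g) : π ⁅x, ⁅x, y⁆⁆ = 0 := by
    refine h.eq_zero_of_forall_lie_eq_zero (hπh _) fun t ht => ?_
    have hyt : ⁅y, t⁆ = 0 := by rw [← lie_skew, hy t ht, neg_zero]
    have := lie_proj_second_variation_eq_zero π hcomm hyt x
    rw [hπlie, hπy, proj_eq_self_of_mem_s13 hpos hπh hπm ht] at this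
    simp only [zero_lie, smul_zero, add_zero] at this
    rw [← lie_skew, this, neg_zero]
  have main (a b : g) : ∀ h' ∈ h, Q ⁅a, ⁅b, y⁆⁆ h' = 0 := fun h' hh' => by
    simpa [proj_lie_lie_eq_zero_of_forall π hπlie hπlie_lie] using hπm ⁅a, ⁅b, y⁆⁆ h' hh'
  exact ⟨main, fun a _ => main a a⟩

/-- If `h` is simple and `y ∈ m` commutes with all of `h`, then `Q([a,[b,y]], h) = 0`
for all `a, b ∈ g`; in particular `Q([a,[a,y]], h) = 0` for all `a ∈ m`. -/
theorem stmt_13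
    (Q : LinearMap.BilinForm ℝ g)
    (hsym : ∀ x y : g, Q x y = Q y x)
    (hpos : ∀ x : g, x ≠ 0 → 0 < Q x x)
    (hinv : ∀ x y z : g, Q ⁅z, x⁆ y + Q x ⁅z, y⁆ = 0)
    (h : LieSubalgebra ℝ g)
    (π : g →ₗ[ℝ] g)
    (hπh : ∀ x : g, π x ∈ h)
    (hπm : ∀ x : g, ∀ w ∈ h, Q (x - π x) w = 0)
    (hsimple : LieAlgebra.IsSimple ℝ h)
    (hcomm : ∀ u v : g, ⁅u, v⁆ = 0 → ⁅π u, π v⁆ = 0)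
    (y : g) (hym : ∀ w ∈ h, Q y w = 0) (hy : ∀ h' ∈ h, ⁅h', y⁆ = 0) :
    (∀ a b : g, ∀ h' ∈ h, Q ⁅a, ⁅b, y⁆⁆ h' = 0)
    ∧ ∀ a : g, (∀ w ∈ h, Q a w = 0) → ∀ h' ∈ h, Q ⁅a, ⁅a, y⁆⁆ h' = 0 :=
  stmt_13_general Q hpos hinv h π hπh hπm hsimple hcomm y hym hy
end

section
/- Let V be a nonzero finite-dimensional real inner product space and let A, B be commuting skew-adjoint endomorphisms of V. Then there exist real numbers s, t, not both zero, such that the endomorphism sA + tB has a nonzero kernel. -/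
/-!
If `A` is singular, `A` itself has a nonzero kernel. Otherwise `A⁻¹ B` is symmetric, because the
two minus signs coming from the skew-adjointness of `A` and `B` cancel; so it has a real
eigenvalue `μ` with eigenvector `v`, and then `(μ A - B) v = 0`.
-/

open scoped RealInnerProductSpace InnerProductSpace

section

variable {𝕜 V : Type*} [RCLike 𝕜] [NormedAddCommGroup V] [InnerProductSpace 𝕜 V]

theorem LinearEquiv.isSymmetric_symm_comp_of_skew (A : V ≃ₗ[𝕜] V) {B : V →ₗ[𝕜] V}
    (hA : ∀ v w : V, ⟪A v, w⟫_𝕜 = -⟪v, A w⟫_𝕜) (hB : ∀ v w : V, ⟪B v, w⟫_𝕜 = -⟪v, B w⟫_𝕜)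
    (hAB : ∀ v : V, A (B v) = B (A v)) :
    (A.symm.toLinearMap ∘ₗ B).IsSymmetric := by
  intro v w
  obtain ⟨u, rfl⟩ := A.surjective w
  have hBA : A.symm (B (A u)) = B u := by rw [← hAB, A.symm_apply_apply]
  calc ⟪A.symm (B v), A u⟫_𝕜 = -⟪A (A.symm (B v)), u⟫_𝕜 := by rw [hA, neg_neg]
    _ = -⟪B v, u⟫_𝕜 := by rw [A.apply_symm_apply]
    _ = ⟪v, B u⟫_𝕜 := by rw [hB, neg_neg]
    _ = ⟪v, A.symm (B (A u))⟫_𝕜 := by rw [hBA]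

theorem exists_real_smul_eq_of_skew_of_injective [FiniteDimensional 𝕜 V] [Nontrivial V]
    {A B : V →ₗ[𝕜] V} (hinj : Function.Injective A)
    (hA : ∀ v w : V, ⟪A v, w⟫_𝕜 = -⟪v, A w⟫_𝕜) (hB : ∀ v w : V, ⟪B v, w⟫_𝕜 = -⟪v, B w⟫_𝕜)
    (hAB : ∀ v : V, A (B v) = B (A v)) :
    ∃ μ : ℝ, ∃ v : V, v ≠ 0 ∧ B v = (μ : 𝕜) • A v := by
  set e := LinearEquiv.ofInjectiveEndo A hinj
  have hsymm := e.isSymmetric_symm_comp_of_skew hA hB hAB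
  obtain ⟨μ, hμ⟩ : ∃ μ : ℝ, Module.End.HasEigenvalue (e.symm.toLinearMap ∘ₗ B) (μ : 𝕜) :=
    ⟨_, hsymm.hasEigenvalue_iSup_of_finiteDimensional⟩
  obtain ⟨v, hv⟩ := hμ.exists_hasEigenvector
  refine ⟨μ, v, hv.2, ?_⟩
  rw [← e.apply_symm_apply (B v)]
  exact (congrArg e hv.apply_eq_smul).trans (map_smul e _ v)

end

/-- Two commuting skew-adjoint endomorphisms of a nonzero finite-dimensional real inner
product space admit a nontrivial linear combination with nonzero kernel. -/
theorem stmt_15 {V : Type*} [NormedAddCommGroup V] [InnerProductSpace ℝ V]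
    [FiniteDimensional ℝ V] [Nontrivial V]
    (A B : V →ₗ[ℝ] V)
    (hA : ∀ v w : V, ⟪A v, w⟫ = -⟪v, A w⟫)
    (hB : ∀ v w : V, ⟪B v, w⟫ = -⟪v, B w⟫)
    (hAB : ∀ v : V, A (B v) = B (A v)) :
    ∃ s t : ℝ, ¬(s = 0 ∧ t = 0) ∧ ∃ v : V, v ≠ 0 ∧ (s • A + t • B) v = 0 := by
  by_cases hinj : Function.Injective A
  · obtain ⟨μ, v, hv, hBv⟩ := exists_real_smul_eq_of_skew_of_injective hinj hA hB hAB
    exact ⟨μ, -1, by simp, v, hv, by simp [hBv]⟩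
  · obtain ⟨v, hAv, hv⟩ : ∃ v, A v = 0 ∧ v ≠ 0 := by
      simpa [injective_iff_map_eq_zero] using hinj
    exact ⟨1, 0, by simp, v, hv, by simp [hAv]⟩
end
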